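/- Let p be a prime and let α, β, γ, δ be positive integers with 0 ≤ γ − δ ≤ min{α, β}, and let G = G(α,β,γ,δ) with central subgroup C = ⟨c⟩. Then every normal subgroup K of G with K·C = G contains c^{p^δ}, and there exists a normal subgroup K of G with K·C = G and K ∩ C = ⟨c^{p^δ}⟩. Consequently, the minimum of |K ∩ C| over normal subgroups K with K·C = G equals p^{γ−δ}. -/

import Mathlib

open scoped commutatorElement

/-- The relators for the presentation
`⟨a, b, c ∣ [a,c] = [b,c] = 1 = a^{p^α} = b^{p^β} = c^{p^γ}, [a,b] = c^{p^δ}⟩`,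
where `a`, `b`, `c` are the generators indexed by `0`, `1`, `2 : Fin 3`. -/
def pgRels (p α β γ δ : ℕ) : Set (FreeGroup (Fin 3)) :=
  {⁅FreeGroup.of (0 : Fin 3), FreeGroup.of (2 : Fin 3)⁆, ⁅FreeGroup.of (1 : Fin 3), FreeGroup.of (2 : Fin 3)⁆,
    FreeGroup.of (0 : Fin 3) ^ p ^ α, FreeGroup.of (1 : Fin 3) ^ p ^ β, FreeGroup.of (2 : Fin 3) ^ p ^ γ,
    ⁅FreeGroup.of (0 : Fin 3), FreeGroup.of (1 : Fin 3)⁆ * (FreeGroup.of (2 : Fin 3) ^ p ^ δ)⁻¹}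

/-- The group `G(α,β,γ,δ)` with presentation
`⟨a, b, c ∣ [a,c] = [b,c] = 1 = a^{p^α} = b^{p^β} = c^{p^γ}, [a,b] = c^{p^δ}⟩`. -/
abbrev GG (p α β γ δ : ℕ) : Type := PresentedGroup (pgRels p α β γ δ)

/-- The generator `a` of `G(α,β,γ,δ)`. -/
def ga (p α β γ δ : ℕ) : GG p α β γ δ := PresentedGroup.of (0 : Fin 3)
/-- The generator `b` of `G(α,β,γ,δ)`. -/
def gb (p α β γ δ : ℕ) : GG p α β γ δ := PresentedGroup.of (1 : Fin 3)
/-- The generator `c` of `G(α,β,γ,δ)`. -/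
def gc (p α β γ δ : ℕ) : GG p α β γ δ := PresentedGroup.of (2 : Fin 3)

/-!
If `K` is normal and `K ⊔ ⟨c⟩ = G`, then `G ⧸ K` is a quotient of the cyclic group `⟨c⟩`, hence
abelian, so `c ^ p ^ δ = ⁅a, b⁆ ∈ K`. The bound is attained by the normal closure of `{a, b}`:
the character `a, b ↦ 0`, `c ↦ 1` into `ZMod (p ^ δ)` shows that it meets `⟨c⟩` only in
`⟨c ^ p ^ δ⟩`. That subgroup has order `p ^ (γ - δ)` because `c` has order exactly `p ^ γ`, as one
sees by mapping `G` to the Heisenberg-type group on `ZMod (p ^ α) × ZMod (p ^ β) × ZMod (p ^ γ)`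
with cocycle `(x, y) ↦ p ^ δ * (x * y mod p ^ (γ - δ))`; this cocycle is well defined precisely
because `γ - δ ≤ min α β`.
-/

namespace Subgroup

variable {G : Type*} [Group G]

theorem commutatorElement_mem_of_sup_eq_top {K Z : Subgroup G} [K.Normal] [IsMulCommutative Z]
    (h : K ⊔ Z = ⊤) (g₁ g₂ : G) : ⁅g₁, g₂⁆ ∈ K := by
  have hsurj : ∀ g : G, ∃ z ∈ Z, (g : G ⧸ K) = z := by
    intro g
    have hg : g ∈ (↑(K ⊔ Z) : Set G) := by simp [h]
    rw [normal_mul] at hg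
    obtain ⟨k, hk, z, hz, rfl⟩ := hg
    exact ⟨z, hz, by rw [QuotientGroup.mk_mul, (QuotientGroup.eq_one_iff k).mpr hk, one_mul]⟩
  obtain ⟨z₁, hz₁, e₁⟩ := hsurj g₁
  obtain ⟨z₂, hz₂, e₂⟩ := hsurj g₂
  rw [← QuotientGroup.eq_one_iff, ← QuotientGroup.mk'_apply, map_commutatorElement,
    QuotientGroup.mk'_apply, QuotientGroup.mk'_apply, e₁, e₂, commutatorElement_eq_one_iff_mul_comm,
    ← QuotientGroup.mk_mul, ← QuotientGroup.mk_mul, setLike_mul_comm hz₁ hz₂]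

theorem zpowers_inf_ker_le {H : Type*} [Group H] (f : G →* H) (c : G) :
    zpowers c ⊓ f.ker ≤ zpowers (c ^ orderOf (f c)) := by
  rintro _ ⟨⟨m, rfl⟩, hm⟩
  obtain ⟨t, rfl⟩ := orderOf_dvd_iff_zpow_eq_one.mpr (by simpa using hm)
  exact ⟨t, by simp [zpow_mul]⟩

theorem isLeast_card_inf {C H : Subgroup G} [Finite C] (P : Subgroup G → Prop)
    (hle : ∀ K, P K → H ≤ K) (hex : ∃ K, P K ∧ K ⊓ C = H) :
    IsLeast {k | ∃ K, P K ∧ Nat.card ↥(K ⊓ C) = k} (Nat.card H) := by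
  obtain ⟨K, hK, hKC⟩ := hex
  refine ⟨⟨K, hK, by rw [hKC]⟩, ?_⟩
  rintro _ ⟨K', hK', rfl⟩
  have : Finite ↥(K' ⊓ C) := Finite.of_injective _ (inclusion_injective inf_le_right)
  exact card_le_of_le (le_inf (hle K' hK') (hKC ▸ inf_le_right))

end Subgroup

@[ext]
structure Heisenberg {A B C : Type*} [AddCommGroup A] [AddCommGroup B] [AddCommGroup C]
    (φ : A →+ B →+ C) where
  x : A
  y : B
  z : C

namespace Heisenberg

variable {A B C : Type*} [AddCommGroup A] [AddCommGroup B] [AddCommGroup C] {φ : A →+ B →+ C}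

instance : Mul (Heisenberg φ) := ⟨fun g h => ⟨g.x + h.x, g.y + h.y, g.z + h.z + φ g.x h.y⟩⟩
instance : One (Heisenberg φ) := ⟨⟨0, 0, 0⟩⟩
instance : Inv (Heisenberg φ) := ⟨fun g => ⟨-g.x, -g.y, -g.z + φ g.x g.y⟩⟩

@[simp] theorem mul_x (g h : Heisenberg φ) : (g * h).x = g.x + h.x := rfl
@[simp] theorem mul_y (g h : Heisenberg φ) : (g * h).y = g.y + h.y := rfl
@[simp] theorem mul_z (g h : Heisenberg φ) : (g * h).z = g.z + h.z + φ g.x h.y := rfl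
@[simp] theorem one_x : (1 : Heisenberg φ).x = 0 := rfl
@[simp] theorem one_y : (1 : Heisenberg φ).y = 0 := rfl
@[simp] theorem one_z : (1 : Heisenberg φ).z = 0 := rfl
@[simp] theorem inv_x (g : Heisenberg φ) : g⁻¹.x = -g.x := rfl
@[simp] theorem inv_y (g : Heisenberg φ) : g⁻¹.y = -g.y := rfl
@[simp] theorem inv_z (g : Heisenberg φ) : g⁻¹.z = -g.z + φ g.x g.y := rfl

instance : Group (Heisenberg φ) where
  mul_assoc g h k := by ext <;> simp <;> abel
  one_mul g := by ext <;> simp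
  mul_one g := by ext <;> simp
  inv_mul_cancel g := by ext <;> simp

def ofX : Multiplicative A →* Heisenberg φ where
  toFun a := ⟨a.toAdd, 0, 0⟩
  map_one' := rfl
  map_mul' a b := by ext <;> simp

def ofY : Multiplicative B →* Heisenberg φ where
  toFun b := ⟨0, b.toAdd, 0⟩
  map_one' := rfl
  map_mul' a b := by ext <;> simp

def ofZ : Multiplicative C →* Heisenberg φ where
  toFun c := ⟨0, 0, c.toAdd⟩
  map_one' := rfl
  map_mul' a b := by ext <;> simp

theorem ofZ_injective : Function.Injective (ofZ : Multiplicative C →* Heisenberg φ) :=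
  fun _ _ h => congrArg Heisenberg.z h

theorem commute_ofZ (g : Heisenberg φ) (c : Multiplicative C) : Commute g (ofZ c) := by
  ext <;> simp [ofZ, add_comm]

theorem commutatorElement_ofX_ofY (a : Multiplicative A) (b : Multiplicative B) :
    ⁅(ofX a : Heisenberg φ), (ofY b : Heisenberg φ)⁆ =
      ofZ (Multiplicative.ofAdd (φ a.toAdd b.toAdd)) := by
  ext <;> simp [commutatorElement_def, ofX, ofY, ofZ]

theorem orderOf_ofZ (c : C) : orderOf (ofZ (.ofAdd c) : Heisenberg φ) = addOrderOf c := by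
  rw [orderOf_injective _ ofZ_injective, orderOf_ofAdd_eq_addOrderOf]

end Heisenberg

namespace ZMod

variable {a b n : ℕ} {C : Type*} [AddCommGroup C]

/-- `(x, y) ↦ (x * y mod n) • t`. -/
def castMulPairing (ha : n ∣ a) (hb : n ∣ b) (t : C) (ht : (n : ℤ) • t = 0) :
    ZMod a →+ ZMod b →+ C :=
  ((AddMonoidHom.mul.compr₂ (ZMod.lift n ⟨zmultiplesHom C t, ht⟩)).comp
    (ZMod.castHom ha (ZMod n)).toAddMonoidHom).compl₂ (ZMod.castHom hb (ZMod n)).toAddMonoidHom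

theorem castMulPairing_one_one (ha : n ∣ a) (hb : n ∣ b) (t : C) (ht : (n : ℤ) • t = 0) :
    castMulPairing ha hb t ht 1 1 = t :=
  by simpa [castMulPairing, ZMod.cast_one ha, ZMod.cast_one hb] using
    ZMod.lift_coe n ⟨zmultiplesHom C t, ht⟩ 1

end ZMod

namespace GG

variable {p α β γ δ : ℕ}

theorem commutatorElement_ga_gb : ⁅ga p α β γ δ, gb p α β γ δ⁆ = gc p α β γ δ ^ p ^ δ := by
  have h := PresentedGroup.one_of_mem (rels := pgRels p α β γ δ)
    (x := ⁅FreeGroup.of (0 : Fin 3), FreeGroup.of 1⁆ * (FreeGroup.of 2 ^ p ^ δ)⁻¹)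
    (by simp [pgRels])
  rwa [map_mul, map_inv, map_pow, map_commutatorElement, mul_inv_eq_one] at h

theorem gc_pow_eq_one : gc p α β γ δ ^ p ^ γ = 1 := by
  have h := PresentedGroup.one_of_mem (rels := pgRels p α β γ δ)
    (x := FreeGroup.of (2 : Fin 3) ^ p ^ γ) (by simp [pgRels])
  rwa [map_pow] at h

def lift {H : Type*} [Group H] (a b c : H) (hac : Commute a c) (hbc : Commute b c)
    (ha : a ^ p ^ α = 1) (hb : b ^ p ^ β = 1) (hc : c ^ p ^ γ = 1) (hab : ⁅a, b⁆ = c ^ p ^ δ) :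
    GG p α β γ δ →* H :=
  PresentedGroup.toGroup (f := ![a, b, c]) <| by
    rintro r (rfl | rfl | rfl | rfl | rfl | rfl) <;>
      simp [map_commutatorElement, commutatorElement_eq_one_iff_commute, *]

section lift
variable {H : Type*} [Group H] {a b c : H} {hac : Commute a c} {hbc : Commute b c}
    {ha : a ^ p ^ α = 1} {hb : b ^ p ^ β = 1} {hc : c ^ p ^ γ = 1} {hab : ⁅a, b⁆ = c ^ p ^ δ}

@[simp] theorem lift_ga : lift a b c hac hbc ha hb hc hab (ga p α β γ δ) = a :=
  PresentedGroup.toGroup.of _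
@[simp] theorem lift_gb : lift a b c hac hbc ha hb hc hab (gb p α β γ δ) = b :=
  PresentedGroup.toGroup.of _
@[simp] theorem lift_gc : lift a b c hac hbc ha hb hc hab (gc p α β γ δ) = c :=
  PresentedGroup.toGroup.of _

end lift

theorem normalClosure_sup_zpowers_gc :
    Subgroup.normalClosure {ga p α β γ δ, gb p α β γ δ} ⊔ Subgroup.zpowers (gc p α β γ δ) = ⊤ := by
  refine eq_top_iff.mpr fun g _ => PresentedGroup.generated_by _ _ (fun j => ?_) g
  fin_cases j
  · exact Subgroup.mem_sup_left (Subgroup.subset_normalClosure (Set.mem_insert _ _))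
  · exact Subgroup.mem_sup_left (Subgroup.subset_normalClosure (Set.mem_insert_of_mem _ rfl))
  · exact Subgroup.mem_sup_right (Subgroup.mem_zpowers _)

theorem orderOf_gc (hα : γ - δ ≤ α) (hβ : γ - δ ≤ β) : orderOf (gc p α β γ δ) = p ^ γ := by
  have ht : ((p ^ (γ - δ) : ℕ) : ℤ) • (p : ZMod (p ^ γ)) ^ δ = 0 := by
    rw [natCast_zsmul, nsmul_eq_mul, ← Nat.cast_pow p δ, ← Nat.cast_mul, ← pow_add,
      ZMod.natCast_eq_zero_iff]
    exact pow_dvd_pow p (by omega)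
  let φ := ZMod.castMulPairing (pow_dvd_pow p hα) (pow_dvd_pow p hβ) _ ht
  let f : GG p α β γ δ →* Heisenberg φ :=
    lift (Heisenberg.ofX (.ofAdd 1)) (Heisenberg.ofY (.ofAdd 1)) (Heisenberg.ofZ (.ofAdd 1))
      (Heisenberg.commute_ofZ _ _) (Heisenberg.commute_ofZ _ _)
      (by simp [← map_pow, ← ofAdd_nsmul])
      (by simp [← map_pow, ← ofAdd_nsmul])
      (by simp [← map_pow, ← ofAdd_nsmul])
      (by simp [Heisenberg.commutatorElement_ofX_ofY, ← map_pow, ← ofAdd_nsmul, φ,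
        ZMod.castMulPairing_one_one])
  refine Nat.dvd_antisymm (orderOf_dvd_of_pow_eq_one gc_pow_eq_one) ?_
  simpa [f, Heisenberg.orderOf_ofZ, ZMod.addOrderOf_one] using orderOf_map_dvd f (gc p α β γ δ)

theorem normalClosure_inf_zpowers_gc (h : δ ≤ γ) :
    Subgroup.normalClosure {ga p α β γ δ, gb p α β γ δ} ⊓ Subgroup.zpowers (gc p α β γ δ) =
      Subgroup.zpowers (gc p α β γ δ ^ p ^ δ) := by
  set K := Subgroup.normalClosure {ga p α β γ δ, gb p α β γ δ}
  let χ : GG p α β γ δ →* Multiplicative (ZMod (p ^ δ)) :=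
    lift 1 1 (.ofAdd 1) (Commute.one_left _) (Commute.one_left _) (one_pow _) (one_pow _)
      (by rw [← ofAdd_nsmul, nsmul_one, Nat.cast_pow, ← Nat.cast_pow,
        (ZMod.natCast_eq_zero_iff _ _).mpr (pow_dvd_pow p h), ofAdd_zero])
      (by simp [← ofAdd_nsmul])
  have hKχ : K ≤ χ.ker :=
    Subgroup.normalClosure_le_normal (by rintro _ (rfl | rfl) <;> simp [χ])
  have hχc : orderOf (χ (gc p α β γ δ)) = p ^ δ := by
    simp [χ, orderOf_ofAdd_eq_addOrderOf, ZMod.addOrderOf_one]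
  have hcK : gc p α β γ δ ^ p ^ δ ∈ K := commutatorElement_ga_gb ▸
    Subgroup.commutator_le_left K K (Subgroup.commutator_mem_commutator
      (Subgroup.subset_normalClosure (Set.mem_insert _ _))
      (Subgroup.subset_normalClosure (Set.mem_insert_of_mem _ rfl)))
  refine le_antisymm ?_ (le_inf (Subgroup.zpowers_le.mpr hcK)
    (Subgroup.zpowers_le.mpr (Subgroup.pow_mem _ (Subgroup.mem_zpowers _) _)))
  calc K ⊓ Subgroup.zpowers (gc p α β γ δ) ≤ Subgroup.zpowers (gc p α β γ δ) ⊓ χ.ker := by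
        rw [inf_comm]; exact inf_le_inf_left _ hKχ
    _ ≤ Subgroup.zpowers (gc p α β γ δ ^ p ^ δ) :=
      (Subgroup.zpowers_inf_ker_le χ _).trans_eq (by rw [hχc])

end GG

theorem GG_extension_class_order_general
    (p : ℕ) (hp : p.Prime) (α β γ δ : ℕ)
    (h1 : δ ≤ γ) (h2 : γ - δ ≤ min α β) :
    (∀ K : Subgroup (GG p α β γ δ), K.Normal →
      K ⊔ Subgroup.zpowers (gc p α β γ δ) = ⊤ → gc p α β γ δ ^ p ^ δ ∈ K) ∧
    (∃ K : Subgroup (GG p α β γ δ), K.Normal ∧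
      K ⊔ Subgroup.zpowers (gc p α β γ δ) = ⊤ ∧
      K ⊓ Subgroup.zpowers (gc p α β γ δ) =
        Subgroup.zpowers (gc p α β γ δ ^ p ^ δ)) ∧
    IsLeast {k : ℕ | ∃ K : Subgroup (GG p α β γ δ), K.Normal ∧
        K ⊔ Subgroup.zpowers (gc p α β γ δ) = ⊤ ∧
        Nat.card ↥(K ⊓ Subgroup.zpowers (gc p α β γ δ)) = k}
      (p ^ (γ - δ)) := by
  have hmem : ∀ K : Subgroup (GG p α β γ δ), K.Normal →
      K ⊔ Subgroup.zpowers (gc p α β γ δ) = ⊤ → gc p α β γ δ ^ p ^ δ ∈ K := fun K _ hK =>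
    GG.commutatorElement_ga_gb ▸ Subgroup.commutatorElement_mem_of_sup_eq_top hK _ _
  have hK₀ : ∃ K : Subgroup (GG p α β γ δ),
      (K.Normal ∧ K ⊔ Subgroup.zpowers (gc p α β γ δ) = ⊤) ∧
      K ⊓ Subgroup.zpowers (gc p α β γ δ) = Subgroup.zpowers (gc p α β γ δ ^ p ^ δ) :=
    ⟨_, ⟨Subgroup.normalClosure_normal, GG.normalClosure_sup_zpowers_gc⟩,
      GG.normalClosure_inf_zpowers_gc h1⟩
  obtain ⟨hα, hβ⟩ := le_min_iff.mp h2
  have hc : orderOf (gc p α β γ δ) = p ^ γ := GG.orderOf_gc hα hβ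
  have hcδ : orderOf (gc p α β γ δ ^ p ^ δ) = p ^ (γ - δ) := by
    rw [orderOf_pow_of_dvd (pow_ne_zero _ hp.ne_zero) (hc ▸ pow_dvd_pow p h1), hc,
      Nat.pow_div h1 hp.pos]
  have : Finite (Subgroup.zpowers (gc p α β γ δ)) :=
    (finite_zpowers.mpr (orderOf_pos_iff.mp (hc ▸ pow_pos hp.pos γ))).to_subtype
  refine ⟨hmem, by simpa only [and_assoc] using hK₀, ?_⟩
  simpa only [and_assoc, Nat.card_zpowers, hcδ] using
    Subgroup.isLeast_card_inf _ (fun K hK => Subgroup.zpowers_le.mpr (hmem K hK.1 hK.2)) hK₀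

/-- For `G = G(α,β,γ,δ)` and `C = ⟨c⟩`: every normal subgroup `K` of `G` with `K·C = G`
contains `c^{p^δ}`; there is a normal subgroup `K` with `K·C = G` and `K ∩ C = ⟨c^{p^δ}⟩`;
consequently the minimum of `|K ∩ C|` over normal `K` with `K·C = G` is `p ^ (γ − δ)`. -/
theorem GG_extension_class_order
    (p : ℕ) (hp : p.Prime) (α β γ δ : ℕ)
    (hα : 0 < α) (hβ : 0 < β) (hγ : 0 < γ) (hδ : 0 < δ)
    (h1 : δ ≤ γ) (h2 : γ - δ ≤ min α β) :
    (∀ K : Subgroup (GG p α β γ δ), K.Normal →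
      K ⊔ Subgroup.zpowers (gc p α β γ δ) = ⊤ → gc p α β γ δ ^ p ^ δ ∈ K) ∧
    (∃ K : Subgroup (GG p α β γ δ), K.Normal ∧
      K ⊔ Subgroup.zpowers (gc p α β γ δ) = ⊤ ∧
      K ⊓ Subgroup.zpowers (gc p α β γ δ) =
        Subgroup.zpowers (gc p α β γ δ ^ p ^ δ)) ∧
    IsLeast {k : ℕ | ∃ K : Subgroup (GG p α β γ δ), K.Normal ∧
        K ⊔ Subgroup.zpowers (gc p α β γ δ) = ⊤ ∧
        Nat.card ↥(K ⊓ Subgroup.zpowers (gc p α β γ δ)) = k}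
      (p ^ (γ - δ)) :=
  GG_extension_class_order_general p hp α β γ δ h1 h2
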